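/- Let X₁,…,Xₙ ∈ ℝ^d with X̄, X̃ᵢ, Σ̂ as defined. Then ∑_{i,j,l=1}^n ⟨Xᵢ − Xⱼ, Xᵢ − X_l⟩² = n² ∑_{i=1}^n ‖X̃ᵢ‖⁴ + 3n³ Tr(Σ̂²). -/

import Mathlib

/-!
Centring does not change the differences `Xᵢ - Xⱼ`, so with `Yᵢ = X̃ᵢ` and the Gram matrix
`Gᵢⱼ = ⟨Yᵢ, Yⱼ⟩` the summand is `(Gᵢᵢ - Gᵢₗ - Gᵢⱼ + Gⱼₗ)²`. The rows and columns of `G` sum to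
zero because `∑ Yᵢ = 0`, so after expanding the square every cross term vanishes when summed over
`j` and `l`, leaving `n² ∑ Gᵢᵢ² + 3n ∑ Gᵢⱼ²`. Finally `n² Tr(Σ̂²) = ∑ Gᵢⱼ²`, since
`Tr(y yᵀ z zᵀ) = ⟨y, z⟩²`.
-/

open Finset

/-- The sample mean of vectors `X₁, …, Xₙ` in `ℝ^d`. -/
noncomputable def sampleMean (n d : ℕ) (X : Fin n → EuclideanSpace ℝ (Fin d)) :
    EuclideanSpace ℝ (Fin d) :=
  (n : ℝ)⁻¹ • ∑ i, X i

/-- The empirical covariance matrix `Σ̂ = (1/n) ∑ᵢ X̃ᵢ X̃ᵢᵀ`. -/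
noncomputable def empCov (n d : ℕ) (X : Fin n → EuclideanSpace ℝ (Fin d)) :
    Matrix (Fin d) (Fin d) ℝ :=
  (n : ℝ)⁻¹ • ∑ i, Matrix.of (fun a b =>
    (X i - sampleMean n d X) a * (X i - sampleMean n d X) b)

section DoublyCentred

variable {ι R : Type*} [Fintype ι] [CommRing R] (a : ι → ι → R)
  (hrow : ∀ i, ∑ j, a i j = 0) (hcol : ∀ j, ∑ i, a i j = 0)
include hrow hcol

theorem sum_sum_sq_sub_sub_add_of_sum_eq_zero (i : ι) :
    ∑ j, ∑ l, (a i i - a i l - a i j + a j l) ^ 2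
      = (Fintype.card ι : R) ^ 2 * a i i ^ 2 + 2 * Fintype.card ι * ∑ j, a i j ^ 2
        + ∑ j, ∑ l, a j l ^ 2 := by
  have hcross : ∑ j, ∑ l, a i l * a j l = 0 := by
    rw [sum_comm]
    simp only [← mul_sum, hcol, mul_zero, sum_const_zero]
  have hexp : ∀ j l, (a i i - a i l - a i j + a j l) ^ 2
      = a i i ^ 2 + a i l ^ 2 + a i j ^ 2 + a j l ^ 2
        - 2 * a i i * a i l - 2 * a i i * a i j + 2 * a i i * a j l
        + 2 * a i j * a i l - 2 * (a i l * a j l) - 2 * a i j * a j l := fun j l => by ring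
  simp only [hexp, sum_add_distrib, sum_sub_distrib, ← mul_sum, sum_const, card_univ,
    nsmul_eq_mul, hrow, hcross, mul_zero]
  ring

theorem sum_sum_sum_sq_sub_sub_add_of_sum_eq_zero :
    ∑ i, ∑ j, ∑ l, (a i i - a i l - a i j + a j l) ^ 2
      = (Fintype.card ι : R) ^ 2 * ∑ i, a i i ^ 2
        + 3 * Fintype.card ι * ∑ i, ∑ j, a i j ^ 2 := by
  simp only [sum_sum_sq_sub_sub_add_of_sum_eq_zero a hrow hcol, sum_add_distrib, ← mul_sum,
    sum_const, card_univ, nsmul_eq_mul]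
  ring

end DoublyCentred

theorem sum_sum_sum_inner_sub_sq_of_sum_eq_zero {ι E : Type*} [Fintype ι] [NormedAddCommGroup E]
    [InnerProductSpace ℝ E] (Y : ι → E) (hY : ∑ i, Y i = 0) :
    ∑ i, ∑ j, ∑ l, inner ℝ (Y i - Y j) (Y i - Y l) ^ 2
      = (Fintype.card ι : ℝ) ^ 2 * ∑ i, ‖Y i‖ ^ 4
        + 3 * Fintype.card ι * ∑ i, ∑ j, inner ℝ (Y i) (Y j) ^ 2 := by
  have hexp : ∀ i j l, inner ℝ (Y i - Y j) (Y i - Y l)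
      = inner ℝ (Y i) (Y i) - inner ℝ (Y i) (Y l) - inner ℝ (Y i) (Y j) + inner ℝ (Y j) (Y l) := by
    intro i j l
    rw [inner_sub_left, inner_sub_right, inner_sub_right, real_inner_comm (Y j) (Y i)]
    ring
  have hnorm : ∀ i, ‖Y i‖ ^ 4 = inner ℝ (Y i) (Y i) ^ 2 := fun i => by
    rw [real_inner_self_eq_norm_sq]; ring
  simp only [hexp, hnorm]
  exact sum_sum_sum_sq_sub_sub_add_of_sum_eq_zero (fun i j => inner ℝ (Y i) (Y j))
    (fun i => by rw [← inner_sum, hY, inner_zero_right])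
    (fun j => by rw [← sum_inner, hY, inner_zero_left])

theorem sum_sub_sampleMean_eq_zero (n d : ℕ) (X : Fin n → EuclideanSpace ℝ (Fin d)) :
    ∑ i, (X i - sampleMean n d X) = 0 := by
  rcases n.eq_zero_or_pos with rfl | hn
  · simp
  · rw [sum_sub_distrib, sum_const, card_univ, Fintype.card_fin, sampleMean,
      ← Nat.cast_smul_eq_nsmul ℝ, smul_inv_smul₀ (by positivity), sub_self]

theorem trace_vecMulVec_self_mul_vecMulVec_self {m R : Type*} [Fintype m] [CommRing R]
    (u v : m → R) : (Matrix.vecMulVec u u * Matrix.vecMulVec v v).trace = (u ⬝ᵥ v) ^ 2 := by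
  rw [Matrix.vecMulVec_mul_vecMulVec, Matrix.trace_vecMulVec, dotProduct_smul, smul_eq_mul, sq]

theorem trace_sum_outer_mul_self {ι : Type*} [Fintype ι] {d : ℕ}
    (Y : ι → EuclideanSpace ℝ (Fin d)) :
    ((∑ i, Matrix.of fun a b => Y i a * Y i b) * ∑ i, Matrix.of fun a b => Y i a * Y i b).trace
      = ∑ i, ∑ j, inner ℝ (Y i) (Y j) ^ 2 := by
  change ((∑ i, Matrix.vecMulVec (Y i).ofLp (Y i).ofLp) *
    ∑ i, Matrix.vecMulVec (Y i).ofLp (Y i).ofLp).trace = _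
  simp only [Finset.sum_mul, Finset.mul_sum, Matrix.trace_sum,
    trace_vecMulVec_self_mul_vecMulVec_self, EuclideanSpace.inner_eq_star_dotProduct,
    star_trivial, dotProduct_comm]

theorem sum_sq_inner_three_general (n d : ℕ) (X : Fin n → EuclideanSpace ℝ (Fin d)) :
    ∑ i, ∑ j, ∑ l, (inner ℝ (X i - X j) (X i - X l) : ℝ) ^ 2
      = (n : ℝ) ^ 2 * ∑ i, ‖X i - sampleMean n d X‖ ^ 4
        + 3 * (n : ℝ) ^ 3 * (empCov n d X * empCov n d X).trace := by
  have hshift : ∀ i j, X i - X j = (X i - sampleMean n d X) - (X j - sampleMean n d X) :=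
    fun i j => (sub_sub_sub_cancel_right _ _ _).symm
  rw [empCov, smul_mul_smul_comm, Matrix.trace_smul, trace_sum_outer_mul_self]
  simp only [hshift]
  rw [sum_sum_sum_inner_sub_sq_of_sum_eq_zero _ (sum_sub_sampleMean_eq_zero n d X),
    Fintype.card_fin]
  have hcube : (n : ℝ) ^ 3 * ((n : ℝ)⁻¹ * (n : ℝ)⁻¹) = n := by
    rcases eq_or_ne (n : ℝ) 0 with h | h
    · simp [h]
    · field_simp
  rw [smul_eq_mul, ← mul_assoc, mul_assoc 3 ((n : ℝ) ^ 3), hcube]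

/-- Lemma B.1 (ii):
`∑_{i,j,l} ⟨Xᵢ − Xⱼ, Xᵢ − X_l⟩² = n² ∑ᵢ ‖X̃ᵢ‖⁴ + 3n³ Tr(Σ̂²)`. -/
theorem sum_sq_inner_three (n d : ℕ) (hn : 0 < n) (X : Fin n → EuclideanSpace ℝ (Fin d)) :
    ∑ i, ∑ j, ∑ l, (inner ℝ (X i - X j) (X i - X l) : ℝ) ^ 2
      = (n : ℝ) ^ 2 * ∑ i, ‖X i - sampleMean n d X‖ ^ 4
        + 3 * (n : ℝ) ^ 3 * (empCov n d X * empCov n d X).trace :=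
  sum_sq_inner_three_general n d X
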